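/- arXiv:2404.03763 — 2 statements merged into one kernel-verified Lean document; each statement's English description precedes it below -/
import Mathlib

section
/- Let W : ℝ → ℝ be smooth, nonnegative, vanishing exactly at s = ±1, and suppose there exist α ∈ (0,1) and β > 0 with W''(s) ≥ β for all s ∈ [-1,-α] ∪ [α,1]. Then for every s ∈ (-1,-α], one has W'(s)/√(2 W(s)) ≥ √β, and for every s ∈ [α,1), one has W'(s)/√(2 W(s)) ≤ -√β. -/
theorem stmt0 (W : ℝ → ℝ) (α β : ℝ)
    (hW_smooth : ContDiff ℝ (⊤ : ℕ∞) W)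
    (hW_nonneg : ∀ s, 0 ≤ W s)
    (hW_zero : ∀ s, W s = 0 ↔ s = 1 ∨ s = -1)
    (hα : α ∈ Set.Ioo (0:ℝ) 1) (hβ : 0 < β)
    (hW'' : ∀ s ∈ Set.Icc (-1:ℝ) (-α) ∪ Set.Icc α 1, β ≤ deriv (deriv W) s) :
    (∀ s ∈ Set.Ioc (-1:ℝ) (-α), Real.sqrt β ≤ deriv W s / Real.sqrt (2 * W s)) ∧
    (∀ s ∈ Set.Ico α (1:ℝ), deriv W s / Real.sqrt (2 * W s) ≤ - Real.sqrt β) := by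
  obtain ⟨hα0, hα1⟩ := hα
  have hWdiff : Differentiable ℝ W := hW_smooth.differentiable (by simp)
  have hdWcd : ContDiff ℝ (⊤:ℕ∞) (deriv W) := (contDiff_infty_iff_deriv.mp (hW_smooth.of_le (by simp))).2
  have hdW : Differentiable ℝ (deriv W) := hdWcd.differentiable (by norm_num)
  have hW1 : W 1 = 0 := (hW_zero 1).mpr (Or.inl rfl)
  have hWm1 : W (-1) = 0 := (hW_zero (-1)).mpr (Or.inr rfl)
  have hd1 : deriv W 1 = 0 := by
    apply IsLocalMin.deriv_eq_zero
    exact Filter.Eventually.of_forall (fun x => by rw [hW1]; exact hW_nonneg x)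
  have hdm1 : deriv W (-1) = 0 := by
    apply IsLocalMin.deriv_eq_zero
    exact Filter.Eventually.of_forall (fun x => by rw [hWm1]; exact hW_nonneg x)
  -- g and its derivative
  set g : ℝ → ℝ := fun x => deriv W x * deriv W x - 2 * β * W x with hg
  have hgd : ∀ x, HasDerivAt g
      (deriv (deriv W) x * deriv W x + deriv W x * deriv (deriv W) x
        - 2 * β * deriv W x) x := by
    intro x
    exact ((hdW x).hasDerivAt.mul (hdW x).hasDerivAt).sub
      (((hWdiff x).hasDerivAt).const_mul (2 * β))
  have hgdiff : Differentiable ℝ g := fun x => ((hgd x).differentiableAt)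
  have hgderiv : ∀ x, deriv g x = deriv (deriv W) x * deriv W x
      + deriv W x * deriv (deriv W) x - 2 * β * deriv W x := fun x => (hgd x).deriv
  constructor
  · -- left side
    have hmono : StrictMonoOn (deriv W) (Set.Icc (-1) (-α)) := by
      apply strictMonoOn_of_deriv_pos (convex_Icc _ _) (hdWcd.continuous.continuousOn)
      intro x hx
      rw [interior_Icc] at hx
      have := hW'' x (Or.inl ⟨hx.1.le, hx.2.le⟩)
      linarith
    have hW'pos : ∀ x ∈ Set.Ioc (-1:ℝ) (-α), 0 < deriv W x := by
      intro x hx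
      have := hmono ⟨le_refl _, by linarith⟩ ⟨hx.1.le, hx.2⟩ hx.1
      rwa [hdm1] at this
    have hganti : MonotoneOn g (Set.Icc (-1) (-α)) := by
      apply monotoneOn_of_deriv_nonneg (convex_Icc _ _) hgdiff.continuous.continuousOn
        (hgdiff.differentiableOn)
      intro x hx
      rw [interior_Icc] at hx
      have h1 := hW'' x (Or.inl ⟨hx.1.le, hx.2.le⟩)
      have h2 := hW'pos x ⟨hx.1, hx.2.le⟩
      rw [hgderiv x]
      nlinarith
    have hgm1 : g (-1) = 0 := by simp [hg, hdm1, hWm1]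
    intro s hs
    have hgpos : 0 ≤ g s := by
      have := hganti ⟨le_refl _, by linarith [hs.2, hs.1]⟩ ⟨hs.1.le, hs.2⟩ hs.1.le
      rwa [hgm1] at this
    have hWs : 0 < W s := by
      rcases lt_or_eq_of_le (hW_nonneg s) with h | h
      · exact h
      · exfalso
        rcases (hW_zero s).mp h.symm with h1 | h1 <;> nlinarith [hs.1, hs.2]
    have hs2 : 0 < Real.sqrt (2 * W s) := Real.sqrt_pos.mpr (by linarith)
    have hW's := hW'pos s hs
    have key : Real.sqrt (β * (2 * W s)) ≤ deriv W s := by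
      have h1 : β * (2 * W s) ≤ (deriv W s) ^ 2 := by
        simp only [hg] at hgpos; nlinarith
      have h2 := Real.sqrt_le_sqrt h1
      rwa [Real.sqrt_sq hW's.le] at h2
    rw [le_div_iff₀ hs2]
    rw [Real.sqrt_mul hβ.le] at key
    linarith
  · -- right side
    have hmono : StrictMonoOn (deriv W) (Set.Icc α 1) := by
      apply strictMonoOn_of_deriv_pos (convex_Icc _ _) (hdWcd.continuous.continuousOn)
      intro x hx
      rw [interior_Icc] at hx
      have := hW'' x (Or.inr ⟨hx.1.le, hx.2.le⟩)
      linarith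
    have hW'neg : ∀ x ∈ Set.Ico α (1:ℝ), deriv W x < 0 := by
      intro x hx
      have := hmono ⟨hx.1, hx.2.le⟩ ⟨by linarith [hx.1], le_refl _⟩ hx.2
      rwa [hd1] at this
    have hganti : AntitoneOn g (Set.Icc α 1) := by
      apply antitoneOn_of_deriv_nonpos (convex_Icc _ _) hgdiff.continuous.continuousOn
        (hgdiff.differentiableOn)
      intro x hx
      rw [interior_Icc] at hx
      have h1 := hW'' x (Or.inr ⟨hx.1.le, hx.2.le⟩)
      have h2 := hW'neg x ⟨hx.1.le, hx.2⟩
      rw [hgderiv x]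
      nlinarith
    have hg1 : g 1 = 0 := by simp [hg, hd1, hW1]
    intro s hs
    have hgpos : 0 ≤ g s := by
      have := hganti ⟨hs.1, hs.2.le⟩ ⟨by linarith [hs.1], le_refl _⟩ hs.2.le
      rwa [hg1] at this
    have hWs : 0 < W s := by
      rcases lt_or_eq_of_le (hW_nonneg s) with h | h
      · exact h
      · exfalso
        rcases (hW_zero s).mp h.symm with h1 | h1 <;> nlinarith [hs.1, hs.2]
    have hs2 : 0 < Real.sqrt (2 * W s) := Real.sqrt_pos.mpr (by linarith)
    have hW's := hW'neg s hs
    have key : Real.sqrt (β * (2 * W s)) ≤ - deriv W s := by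
      have h1 : β * (2 * W s) ≤ (deriv W s) ^ 2 := by
        simp only [hg] at hgpos; nlinarith
      have h2 := Real.sqrt_le_sqrt h1
      rwa [Real.sqrt_sq_eq_abs, abs_of_neg hW's] at h2
    rw [div_le_iff₀ hs2]
    rw [Real.sqrt_mul hβ.le] at key
    linarith
end

section
/- Let ρ = ρ_{(y,s)}(x,t) = (4π(s-t))^{-(n-1)/2} exp(-|x-y|²/(4(s-t))) and let v ∈ ℝⁿ be a unit vector. Then ∂_t ρ + Δ_x ρ - (v ⊗ v)·∇²_x ρ + (∇_x ρ · v)²/ρ = 0 at every (x,t) with 0 < t < s. -/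
open Set

lemma hasDerivAt_aux (K p q τ : ℝ) :
    HasDerivAt (fun τ : ℝ => K * Real.exp (p*τ^2 + q*τ))
      (K * Real.exp (p*τ^2 + q*τ) * (2*p*τ + q)) τ := by
  have h1 : HasDerivAt (fun τ : ℝ => p*τ^2 + q*τ) (2*p*τ + q) τ := by
    have := ((hasDerivAt_pow 2 τ).const_mul p).add ((hasDerivAt_id τ).const_mul q)
    refine this.congr_deriv ?_
    ring
  have := (h1.exp).const_mul K
  refine this.congr_deriv ?_
  ring

lemma deriv_aux (K p q : ℝ) :
    deriv (fun τ : ℝ => K * Real.exp (p*τ^2 + q*τ)) 0 = K * q := by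
  have := (hasDerivAt_aux K p q 0).deriv
  simpa using this

lemma iteratedDeriv2_aux (K p q : ℝ) :
    iteratedDeriv 2 (fun τ : ℝ => K * Real.exp (p*τ^2 + q*τ)) 0 = K * (q^2 + 2*p) := by
  have hd : deriv (fun τ : ℝ => K * Real.exp (p*τ^2 + q*τ))
      = fun τ => K * Real.exp (p*τ^2 + q*τ) * (2*p*τ + q) := by
    funext τ; exact (hasDerivAt_aux K p q τ).deriv
  have hlin : HasDerivAt (fun τ : ℝ => 2*p*τ + q) (2*p) 0 := by
    simpa using ((hasDerivAt_id (0:ℝ)).const_mul (2*p)).add_const q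
  have h2 : HasDerivAt (fun τ => K * Real.exp (p*τ^2 + q*τ) * (2*p*τ + q))
      ((K * Real.exp (p*0^2 + q*0) * (2*p*0 + q)) * (2*p*0 + q)
        + (K * Real.exp (p*0^2 + q*0)) * (2*p)) 0 :=
    (hasDerivAt_aux K p q 0).mul hlin
  rw [show (2:ℕ) = 1 + 1 from rfl, iteratedDeriv_succ, iteratedDeriv_one, hd]
  rw [h2.deriv]
  simp
  ring

lemma spatial {n : ℕ} (y : EuclideanSpace ℝ (Fin n)) (s t : ℝ) (ht : t < s)
    (ρ : EuclideanSpace ℝ (Fin n) → ℝ → ℝ)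
    (hρ : ∀ x t, ρ x t = (4 * Real.pi * (s - t)) ^ (-(((n:ℝ) - 1) / 2)) *
      Real.exp (-‖x - y‖^2 / (4 * (s - t))))
    (x w : EuclideanSpace ℝ (Fin n)) :
    (fun τ : ℝ => ρ (x + τ • w) t)
      = fun τ => ρ x t * Real.exp ((-‖w‖^2/(4*(s-t))) * τ^2
          + (-(inner ℝ (x - y) w : ℝ)/(2*(s-t))) * τ) := by
  have hE : s - t ≠ 0 := by linarith
  funext τ
  rw [hρ, hρ, mul_assoc _ (Real.exp _) (Real.exp _), ← Real.exp_add]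
  congr 2
  have h1 : x + τ • w - y = (x - y) + τ • w := by abel
  rw [h1, @norm_add_sq_real, real_inner_smul_right, norm_smul]
  simp only [Real.norm_eq_abs, mul_pow, sq_abs]
  field_simp
  ring

lemma timederiv (α R s t : ℝ) (ht : t < s) :
    HasDerivAt (fun τ : ℝ => (4 * Real.pi * (s - τ)) ^ α * Real.exp (-R / (4 * (s - τ))))
      ((4 * Real.pi * (s - t)) ^ α * Real.exp (-R / (4 * (s - t)))
        * (-α / (s - t) - R / (4 * (s - t)^2))) t := by
  have hπ : (0:ℝ) < Real.pi := Real.pi_pos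
  have hE : (0:ℝ) < s - t := by linarith
  have hB : (0:ℝ) < 4 * Real.pi * (s - t) := by positivity
  have h0 : HasDerivAt (fun τ : ℝ => 4 * Real.pi * (s - τ)) (-(4 * Real.pi)) t := by
    simpa using ((hasDerivAt_id t).const_sub s).const_mul (4 * Real.pi)
  have h1 : HasDerivAt (fun τ : ℝ => (4 * Real.pi * (s - τ)) ^ α)
      (α * (4 * Real.pi * (s - t)) ^ (α - 1) * (-(4 * Real.pi))) t := by
    have := h0.rpow_const (p := α) (Or.inl hB.ne')
    convert this using 1
    ring
  have h2 : HasDerivAt (fun τ : ℝ => 4 * (s - τ)) (-4) t := by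
    simpa using ((hasDerivAt_id t).const_sub s).const_mul (4:ℝ)
  have hden : (4 : ℝ) * (s - t) ≠ 0 := by positivity
  have h3 : HasDerivAt (fun τ : ℝ => -R / (4 * (s - τ)))
      ((0 * (4 * (s - t)) - (-R) * (-4)) / (4 * (s - t))^2) t :=
    (hasDerivAt_const t (-R)).div h2 hden
  have h5 := h1.mul h3.exp
  refine h5.congr_deriv ?_
  rw [Real.rpow_sub_one hB.ne']
  field_simp
  ring

/-- The Laplacian of `f : ℝⁿ → ℝ` at `x`, as the sum of the second derivatives of `f`
along the coordinate directions. -/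
noncomputable def lap {n : ℕ} (f : EuclideanSpace ℝ (Fin n) → ℝ)
    (x : EuclideanSpace ℝ (Fin n)) : ℝ :=
  ∑ i : Fin n, iteratedDeriv 2 (fun τ : ℝ => f (x + τ • EuclideanSpace.single i (1:ℝ))) 0

theorem stmt10 {n : ℕ} (hn : 2 ≤ n) (y v : EuclideanSpace ℝ (Fin n)) (hv : ‖v‖ = 1)
    (s : ℝ) (ρ : EuclideanSpace ℝ (Fin n) → ℝ → ℝ)
    (hρ : ∀ x t, ρ x t = (4 * Real.pi * (s - t)) ^ (-(((n:ℝ) - 1) / 2)) *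
      Real.exp (-‖x - y‖^2 / (4 * (s - t)))) :
    ∀ (x : EuclideanSpace ℝ (Fin n)) (t : ℝ), 0 < t → t < s →
      deriv (fun τ => ρ x τ) t + lap (fun z => ρ z t) x
        - iteratedDeriv 2 (fun τ : ℝ => ρ (x + τ • v) t) 0
        + (deriv (fun τ : ℝ => ρ (x + τ • v) t) 0)^2 / ρ x t = 0 := by
  intro x t ht hts
  have hπ : (0:ℝ) < Real.pi := Real.pi_pos
  have hE : (0:ℝ) < s - t := by linarith
  have hKpos : 0 < ρ x t := by rw [hρ]; positivity
  -- time derivative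
  have htime : deriv (fun τ => ρ x τ) t
      = ρ x t * (-(-(((n:ℝ) - 1) / 2)) / (s - t) - ‖x - y‖^2 / (4 * (s - t)^2)) := by
    rw [show (fun τ => ρ x τ)
        = fun τ : ℝ => (4 * Real.pi * (s - τ)) ^ (-(((n:ℝ) - 1) / 2)) *
          Real.exp (-‖x - y‖^2 / (4 * (s - τ))) from funext fun τ => hρ x τ,
      (timederiv (-(((n:ℝ) - 1) / 2)) (‖x - y‖^2) s t hts).deriv, ← hρ]
  -- Laplacian
  have hRsum : ‖x - y‖^2 = ∑ i, ((x - y) i)^2 := by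
    rw [EuclideanSpace.norm_eq, Real.sq_sqrt (by positivity)]
    simp [sq_abs]
  have hlap : lap (fun z => ρ z t) x
      = ρ x t * (‖x - y‖^2 / (4 * (s - t)^2) - n / (2 * (s - t))) := by
    unfold lap
    have hterm : ∀ i : Fin n,
        iteratedDeriv 2 (fun τ : ℝ => ρ (x + τ • EuclideanSpace.single i (1:ℝ)) t) 0
          = ((x - y) i)^2 * (ρ x t / (4 * (s - t)^2)) + (-(ρ x t / (2 * (s - t)))) := by
      intro i
      rw [spatial y s t hts ρ hρ x _, iteratedDeriv2_aux]
      have h1 : ‖EuclideanSpace.single i (1:ℝ)‖ = 1 := by simp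
      have h2 : (inner ℝ (x - y) (EuclideanSpace.single i (1:ℝ)) : ℝ) = (x - y) i := by
        rw [EuclideanSpace.inner_single_right]; simp
      rw [h1, h2]
      field_simp
      ring
    rw [Finset.sum_congr rfl fun i _ => hterm i, Finset.sum_add_distrib, ← Finset.sum_mul,
      ← hRsum, Finset.sum_const, Finset.card_univ, Fintype.card_fin]
    rw [nsmul_eq_mul]
    field_simp
    ring
  -- directional terms
  have hv2 : iteratedDeriv 2 (fun τ : ℝ => ρ (x + τ • v) t) 0
      = ρ x t * ((-(inner ℝ (x - y) v : ℝ) / (2 * (s - t)))^2 + 2 * (-1 / (4 * (s - t)))) := by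
    rw [spatial y s t hts ρ hρ x v, iteratedDeriv2_aux, hv]
    norm_num
  have hv1 : deriv (fun τ : ℝ => ρ (x + τ • v) t) 0
      = ρ x t * (-(inner ℝ (x - y) v : ℝ) / (2 * (s - t))) := by
    rw [spatial y s t hts ρ hρ x v, deriv_aux]
  rw [htime, hlap, hv2, hv1]
  field_simp
  ring
end
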